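/- Let f, g be entire functions with |ĝ(k)| ≤ C I_k(a) for all k ∈ ℤ and some a > 0, where ĝ(k) are the Fourier coefficients of the 2π-periodic extension g(z) = ∑_k ĝ(k) e^{ikz}. Then the discrete-heat evolution g(·, t) defined by ĝ(k,t) = e^{−2t} ∑_{m} ĝ(m,0) I_{m−k}(2t) satisfies |ĝ(k,t)| ≤ C I_k(2t + a) for all k∈ℤ and t ≥ 0. -/

import Mathlib

open MeasureTheory

/-- Modified Bessel function of integer order `k`, complex argument:
`I_k(z) = (1/π) ∫₀^π e^{z cos θ} cos(kθ) dθ`. -/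
noncomputable def besselI (k : ℤ) (z : ℂ) : ℂ :=
  (1 / (Real.pi : ℂ)) * ∫ θ in (0:ℝ)..Real.pi, Complex.exp (z * Real.cos θ) * Real.cos (k * θ)

/-- Modified Bessel function of integer order `k`, real argument. -/
noncomputable def besselIR (k : ℤ) (x : ℝ) : ℝ :=
  (1 / Real.pi) * ∫ θ in (0:ℝ)..Real.pi, Real.exp (x * Real.cos θ) * Real.cos (k * θ)

/-!
Write `cos θ ^ n = ∑ₖ c n k * cos (k θ)` with `c = cosPowCoeff`. The recursion
`c (n + 1) k = (c n (k - 1) + c n (k + 1)) / 2` shows that `c n` is the law of the simple random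
walk on `ℤ` after `n` steps, so it is nonnegative with total mass one. Expanding the exponential
in the integral formula gives `I_k(x) = ∑ₙ xⁿ / n! * c n k`, hence `I_k(x) ≥ 0` for `x ≥ 0`, and
after exchanging the two sums `e^{x cos θ} = ∑ₘ I_m(x) cos (m θ)`. Multiplying by
`e^{y cos θ} cos (k θ)` and integrating termwise over `[0, π]` yields the addition formula
`∑ₘ I_m(x) I_{m-k}(y) = I_k(x + y)` for `x, y ≥ 0`. The bound then follows from the triangle
inequality, `|e^{-2t}| ≤ 1` and the addition formula with `x = a`, `y = 2t`.
-/

open Real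
open scoped Nat

theorem intervalIntegral.hasSum_integral_of_norm_le {ι E : Type*} [Countable ι]
    [NormedAddCommGroup E] [NormedSpace ℝ E] {F : ι → ℝ → E} {f : ℝ → E} {M : ι → ℝ}
    {a b : ℝ} (hF : ∀ i, Continuous (F i)) (hFM : ∀ i t, ‖F i t‖ ≤ M i) (hM : Summable M)
    (hFf : ∀ t, HasSum (fun i => F i t) (f t)) :
    HasSum (fun i => ∫ t in a..b, F i t) (∫ t in a..b, f t) :=
  hasSum_integral_of_dominated_convergence (fun i _ => M i)
    (fun i => (hF i).aestronglyMeasurable) (fun i => ae_of_all _ fun t _ => hFM i t)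
    (ae_of_all _ fun _ _ => hM) intervalIntegrable_const (ae_of_all _ fun t _ => hFf t)

theorem Real.hasSum_pow_div_factorial (x : ℝ) : HasSum (fun n : ℕ => x ^ n / n !) (exp x) :=
  exp_eq_exp_ℝ ▸ NormedSpace.expSeries_div_hasSum_exp x

theorem integral_cos_int_mul_eq_zero {k : ℤ} (hk : k ≠ 0) :
    ∫ θ in (0 : ℝ)..π, cos (k * θ) = 0 := by
  have hk' : (k : ℝ) ≠ 0 := by exact_mod_cast hk
  simp [intervalIntegral.integral_comp_mul_left (fun θ => cos θ) hk', sin_int_mul_pi]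

noncomputable def cosPowCoeff (n : ℕ) (k : ℤ) : ℝ :=
  (1 / π) * ∫ θ in (0 : ℝ)..π, cos θ ^ n * cos (k * θ)

theorem cosPowCoeff_zero (k : ℤ) : cosPowCoeff 0 k = if k = 0 then 1 else 0 := by
  split_ifs with hk
  · simp [cosPowCoeff, hk, pi_ne_zero]
  · simp [cosPowCoeff, integral_cos_int_mul_eq_zero hk]

theorem cosPowCoeff_succ (n : ℕ) (k : ℤ) :
    cosPowCoeff (n + 1) k = (cosPowCoeff n (k - 1) + cosPowCoeff n (k + 1)) / 2 := by
  have hint (j : ℤ) : IntervalIntegrable (fun θ => cos θ ^ n * cos (j * θ)) volume 0 π := by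
    apply Continuous.intervalIntegrable; fun_prop
  have hpt (θ : ℝ) : cos θ ^ (n + 1) * cos (k * θ) =
      (cos θ ^ n * cos ((k - 1 : ℤ) * θ) + cos θ ^ n * cos ((k + 1 : ℤ) * θ)) / 2 := by
    push_cast
    rw [sub_mul, add_mul, one_mul, ← mul_add, ← two_mul_cos_mul_cos]
    ring
  simp only [cosPowCoeff, hpt, intervalIntegral.integral_div,
    intervalIntegral.integral_add (hint _) (hint _)]
  ring

theorem cosPowCoeff_nonneg (n : ℕ) (k : ℤ) : 0 ≤ cosPowCoeff n k := by
  induction n generalizing k with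
  | zero => rw [cosPowCoeff_zero]; split_ifs <;> norm_num
  | succ n ih => rw [cosPowCoeff_succ]; linarith [ih (k - 1), ih (k + 1)]

theorem cosPowCoeff_eq_zero_of_lt_abs {n : ℕ} {k : ℤ} (h : n < |k|) : cosPowCoeff n k = 0 := by
  induction n generalizing k with
  | zero => rw [cosPowCoeff_zero, if_neg]; rintro rfl; simp at h
  | succ n ih =>
    rw [lt_abs] at h
    rw [cosPowCoeff_succ, ih (by rw [lt_abs]; omega), ih (by rw [lt_abs]; omega)]
    norm_num

theorem summable_cosPowCoeff_mul (n : ℕ) (g : ℤ → ℝ) :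
    Summable fun k => cosPowCoeff n k * g k := by
  refine summable_of_ne_finset_zero (s := Finset.Icc (-n : ℤ) n) fun k hk => ?_
  rw [cosPowCoeff_eq_zero_of_lt_abs, zero_mul]
  rw [Finset.mem_Icc, not_and_or] at hk
  rw [lt_abs]; omega

theorem tsum_cosPowCoeff_succ_mul (n : ℕ) (g : ℤ → ℝ) :
    ∑' k, cosPowCoeff (n + 1) k * g k =
      ∑' k, cosPowCoeff n k * ((g (k - 1) + g (k + 1)) / 2) := by
  have shift (j : ℤ) : HasSum (fun k => cosPowCoeff n (k - j) * g k)
      (∑' k, cosPowCoeff n k * g (k + j)) :=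
    (Equiv.addRight j).hasSum_iff.mp <| by
      simpa [Function.comp_def] using (summable_cosPowCoeff_mul n fun k => g (k + j)).hasSum
  have h := ((shift 1).add (shift (-1))).div_const 2
  rw [← Summable.tsum_add (summable_cosPowCoeff_mul n _) (summable_cosPowCoeff_mul n _),
    ← tsum_div_const] at h
  convert h.tsum_eq using 1
  · exact tsum_congr fun k => by rw [cosPowCoeff_succ]; ring_nf
  · exact tsum_congr fun k => by ring_nf

theorem tsum_cosPowCoeff_mul_cos (n : ℕ) (θ : ℝ) :
    ∑' k : ℤ, cosPowCoeff n k * cos (k * θ) = cos θ ^ n := by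
  induction n with
  | zero =>
    rw [tsum_eq_single 0 fun k hk => by rw [cosPowCoeff_zero, if_neg hk, zero_mul]]
    simp [cosPowCoeff_zero]
  | succ n ih =>
    have hpt (k : ℤ) :
        (cos ((k - 1 : ℤ) * θ) + cos ((k + 1 : ℤ) * θ)) / 2 = cos (k * θ) * cos θ := by
      push_cast
      rw [sub_mul, add_mul, one_mul, ← two_mul_cos_mul_cos]
      ring
    simp_rw [tsum_cosPowCoeff_succ_mul, hpt, ← mul_assoc]
    rw [tsum_mul_right, ih, pow_succ]

theorem hasSum_cosPowCoeff_mul_cos (n : ℕ) (θ : ℝ) :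
    HasSum (fun k : ℤ => cosPowCoeff n k * cos (k * θ)) (cos θ ^ n) :=
  tsum_cosPowCoeff_mul_cos n θ ▸ (summable_cosPowCoeff_mul n _).hasSum

theorem hasSum_cosPowCoeff (n : ℕ) : HasSum (cosPowCoeff n) 1 := by
  simpa using hasSum_cosPowCoeff_mul_cos n 0

theorem hasSum_besselIR_series (k : ℤ) (x : ℝ) :
    HasSum (fun n : ℕ => x ^ n / n ! * cosPowCoeff n k) (besselIR k x) := by
  have hbound (n : ℕ) (θ : ℝ) : ‖(x * cos θ) ^ n / n ! * cos (k * θ)‖ ≤ |x| ^ n / n ! := by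
    have : |x * cos θ| ≤ |x| := by
      rw [abs_mul]; exact mul_le_of_le_one_right (abs_nonneg x) (abs_cos_le_one θ)
    rw [norm_mul, norm_div, norm_pow, Real.norm_natCast, Real.norm_eq_abs, Real.norm_eq_abs]
    exact (mul_le_of_le_one_right (by positivity) (abs_cos_le_one _)).trans (by gcongr)
  have h := (intervalIntegral.hasSum_integral_of_norm_le (a := 0) (b := π)
    (fun n => by fun_prop) hbound (summable_pow_div_factorial |x|)
    fun θ => (hasSum_pow_div_factorial (x * cos θ)).mul_right (cos (k * θ))).mul_left (1 / π)
  have hterm (n : ℕ) : 1 / π * ∫ θ in (0 : ℝ)..π, (x * cos θ) ^ n / n ! * cos (k * θ) =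
      x ^ n / n ! * cosPowCoeff n k := by
    simp_rw [mul_pow, mul_div_right_comm, mul_assoc, intervalIntegral.integral_const_mul,
      cosPowCoeff]
    ring
  rw [besselIR]
  simpa only [hterm] using h

theorem hasSum_besselIR_mul_cos (x θ : ℝ) :
    HasSum (fun m : ℤ => besselIR m x * cos (m * θ)) (exp (x * cos θ)) := by
  set f : ℕ × ℤ → ℝ := fun p => x ^ p.1 / p.1 ! * cosPowCoeff p.1 p.2 * cos (p.2 * θ)
  have hdom : Summable fun p : ℕ × ℤ => |x| ^ p.1 / p.1 ! * cosPowCoeff p.1 p.2 := by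
    have hnonneg : 0 ≤ fun p : ℕ × ℤ => |x| ^ p.1 / p.1 ! * cosPowCoeff p.1 p.2 := fun p => by
      have := cosPowCoeff_nonneg p.1 p.2
      positivity
    have hrow (n : ℕ) := (hasSum_cosPowCoeff n).mul_left (|x| ^ n / n !)
    refine (summable_prod_of_nonneg hnonneg).2 ⟨fun n => (hrow n).summable, ?_⟩
    simpa only [(hrow _).tsum_eq, mul_one] using summable_pow_div_factorial |x|
  have hf : Summable f := hdom.of_norm_bounded fun p => by
    have := cosPowCoeff_nonneg p.1 p.2
    rw [norm_mul, norm_mul, norm_div, norm_pow, Real.norm_natCast, Real.norm_eq_abs,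
      Real.norm_of_nonneg this, Real.norm_eq_abs]
    exact mul_le_of_le_one_right (by positivity) (abs_cos_le_one _)
  have hrow (n : ℕ) : HasSum (fun m => f (n, m)) ((x * cos θ) ^ n / n !) := by
    simpa only [f, mul_assoc, mul_pow, mul_div_right_comm]
      using (hasSum_cosPowCoeff_mul_cos n θ).mul_left (x ^ n / n !)
  have hcol (m : ℤ) : HasSum (fun n => f (n, m)) (besselIR m x * cos (m * θ)) :=
    (hasSum_besselIR_series m x).mul_right (cos (m * θ))
  have hsum : HasSum f (exp (x * cos θ)) := by
    rw [(hasSum_pow_div_factorial (x * cos θ)).unique (hf.hasSum.prod_fiberwise hrow)]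
    exact hf.hasSum
  exact ((Equiv.prodComm ℤ ℕ).hasSum_iff.mpr hsum).prod_fiberwise hcol

theorem besselIR_neg (k : ℤ) (x : ℝ) : besselIR (-k) x = besselIR k x := by
  simp [besselIR]

theorem besselIR_nonneg (k : ℤ) {x : ℝ} (hx : 0 ≤ x) : 0 ≤ besselIR k x :=
  (hasSum_besselIR_series k x).nonneg fun n => by
    have := cosPowCoeff_nonneg n k
    positivity

theorem hasSum_besselIR (x : ℝ) : HasSum (fun m : ℤ => besselIR m x) (exp x) := by
  simpa using hasSum_besselIR_mul_cos x 0

theorem besselIR_le_exp (k : ℤ) {x : ℝ} (hx : 0 ≤ x) : besselIR k x ≤ exp x :=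
  le_hasSum (hasSum_besselIR x) k fun m _ => besselIR_nonneg m hx

theorem integral_exp_mul_cos_mul_cos (y : ℝ) (k : ℤ) :
    ∫ θ in (0 : ℝ)..π, exp (y * cos θ) * cos (k * θ) = π * besselIR k y := by
  rw [besselIR, ← mul_assoc, mul_one_div_cancel pi_ne_zero, one_mul]

theorem integral_cos_mul_exp_mul_cos_mul_cos (y : ℝ) (m k : ℤ) :
    ∫ θ in (0 : ℝ)..π, cos (m * θ) * (exp (y * cos θ) * cos (k * θ)) =
      π * (besselIR (m - k) y + besselIR (m + k) y) / 2 := by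
  have hint (j : ℤ) :
      IntervalIntegrable (fun θ => exp (y * cos θ) * cos (j * θ)) volume 0 π := by
    apply Continuous.intervalIntegrable; fun_prop
  have hpt (θ : ℝ) : cos (m * θ) * (exp (y * cos θ) * cos (k * θ)) =
      (exp (y * cos θ) * cos ((m - k : ℤ) * θ) + exp (y * cos θ) * cos ((m + k : ℤ) * θ)) / 2 := by
    push_cast
    rw [sub_mul, add_mul, ← mul_add, ← two_mul_cos_mul_cos]
    ring
  simp only [hpt, intervalIntegral.integral_div, intervalIntegral.integral_add (hint _) (hint _),
    integral_exp_mul_cos_mul_cos]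
  ring

theorem hasSum_besselIR_mul_besselIR_sub {x y : ℝ} (hx : 0 ≤ x) (hy : 0 ≤ y) (k : ℤ) :
    HasSum (fun m : ℤ => besselIR m x * besselIR (m - k) y) (besselIR k (x + y)) := by
  have hbound (m : ℤ) (θ : ℝ) :
      ‖besselIR m x * cos (m * θ) * (exp (y * cos θ) * cos (k * θ))‖ ≤ besselIR m x * exp y := by
    have hI := besselIR_nonneg m hx
    have : exp (y * cos θ) ≤ exp y := exp_le_exp.2 (mul_le_of_le_one_right hy (cos_le_one θ))
    rw [norm_mul, norm_mul, norm_mul, Real.norm_of_nonneg hI, Real.norm_of_nonneg (exp_pos _).le]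
    calc besselIR m x * ‖cos (m * θ)‖ * (exp (y * cos θ) * ‖cos (k * θ)‖)
        ≤ besselIR m x * 1 * (exp y * 1) := by
          gcongr <;> exact (Real.norm_eq_abs _).trans_le (abs_cos_le_one _)
      _ = besselIR m x * exp y := by ring
  have hint := intervalIntegral.hasSum_integral_of_norm_le (a := 0) (b := π)
    (fun m => by fun_prop) hbound ((hasSum_besselIR x).summable.mul_right (exp y))
    fun θ => (hasSum_besselIR_mul_cos x θ).mul_right (exp (y * cos θ) * cos (k * θ))
  simp only [mul_assoc, intervalIntegral.integral_const_mul, integral_cos_mul_exp_mul_cos_mul_cos,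
    ← mul_assoc (exp _), ← exp_add, ← add_mul, integral_exp_mul_cos_mul_cos] at hint
  set u : ℤ → ℝ := fun m => besselIR m x * besselIR (m - k) y
  have hu : Summable u :=
    ((hasSum_besselIR x).summable.mul_right (exp y)).of_nonneg_of_le
      (fun m => mul_nonneg (besselIR_nonneg m hx) (besselIR_nonneg _ hy))
      fun m => mul_le_mul_of_nonneg_left (besselIR_le_exp _ hy) (besselIR_nonneg m hx)
  -- `hint` is the average of `u` and this companion series; the reflection `m ↦ -m` equates them.
  have hu_neg : HasSum (fun m => besselIR m x * besselIR (m + k) y) (∑' m, u m) := by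
    refine (Equiv.neg ℤ).hasSum_iff.mpr hu.hasSum |>.congr_fun fun m => ?_
    simp only [u, Function.comp_apply, Equiv.neg_apply, besselIR_neg]
    rw [← neg_add', besselIR_neg]
  have hsym := ((hu.hasSum.add hu_neg).mul_left (π / 2)).unique
    (hint.congr_fun fun m => by simp only [u]; ring)
  have : ∑' m, u m = besselIR k (x + y) := mul_left_cancel₀ pi_ne_zero (by linarith)
  exact this ▸ hu.hasSum

theorem besselI_ofReal (k : ℤ) (x : ℝ) : besselI k x = besselIR k x := by
  simp only [besselI, besselIR, Complex.ofReal_mul, ← intervalIntegral.integral_ofReal,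
    Complex.ofReal_exp, Complex.ofReal_div, Complex.ofReal_one]

theorem stmt_18_general (a C : ℝ) (ha : 0 < a)
    (c : ℤ → ℂ)
    (hc : ∀ k : ℤ, ‖c k‖ ≤ C * besselIR k a) :
    ∀ (k : ℤ) (t : ℝ), 0 ≤ t →
      ‖Complex.exp (-2 * (t : ℂ)) *
          ∑' m : ℤ, c m * besselI (m - k) (2 * (t : ℂ))‖ ≤
        C * besselIR k (2 * t + a) := by
  intro k t ht
  have h2t : 0 ≤ 2 * t := by linarith
  have hsum : HasSum (fun m : ℤ => C * (besselIR m a * besselIR (m - k) (2 * t)))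
      (C * besselIR k (2 * t + a)) := by
    rw [add_comm]
    exact (hasSum_besselIR_mul_besselIR_sub ha.le h2t k).mul_left C
  have hterm (m : ℤ) : ‖c m * besselI (m - k) (2 * (t : ℂ))‖ ≤
      C * (besselIR m a * besselIR (m - k) (2 * t)) := by
    rw [← mul_assoc, norm_mul, ← Complex.ofReal_ofNat, ← Complex.ofReal_mul, besselI_ofReal,
      Complex.norm_real, Real.norm_of_nonneg (besselIR_nonneg _ h2t)]
    exact mul_le_mul_of_nonneg_right (hc m) (besselIR_nonneg _ h2t)
  have hexp : ‖Complex.exp (-2 * (t : ℂ))‖ ≤ 1 := by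
    rw [Complex.norm_exp, exp_le_one_iff]
    simpa using ht
  rw [norm_mul]
  exact (mul_le_of_le_one_left (norm_nonneg _) hexp).trans (tsum_of_norm_bounded hsum hterm)

/-- Discrete heat evolution of Fourier coefficients bounded by Bessel functions:
if |c(k)| ≤ C I_k(a), then the evolved coefficients
c(k,t) = e^{-2t} ∑_m c(m) I_{m-k}(2t) satisfy |c(k,t)| ≤ C I_k(2t + a). -/
theorem stmt_18 (a C : ℝ) (ha : 0 < a)
    (f g : ℂ → ℂ) (hf : Differentiable ℂ f) (hg : Differentiable ℂ g)
    (c : ℤ → ℂ)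
    (hgc : ∀ z : ℂ, g z = ∑' k : ℤ, c k * Complex.exp (Complex.I * (k : ℂ) * z))
    (hc : ∀ k : ℤ, ‖c k‖ ≤ C * besselIR k a) :
    ∀ (k : ℤ) (t : ℝ), 0 ≤ t →
      ‖Complex.exp (-2 * (t : ℂ)) *
          ∑' m : ℤ, c m * besselI (m - k) (2 * (t : ℂ))‖ ≤
        C * besselIR k (2 * t + a) :=
  stmt_18_general a C ha c hc
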